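/- arXiv:1703.09565 — 2 statements merged into one kernel-verified Lean document; each statement's English description precedes it below -/
import Mathlib

section
/- Let a₄, a₅ ∈ ℝ, a₃ > 0, and define g(x,y) = a₄|x|^{3/2} + a₅y. Set a₈ = sup_{u≥0}(9a₄²u − 0.25a₃u²). Then for all x, x̄, y, ȳ ∈ ℝ: (g(x,y) − g(x̄,ȳ))² ≤ 2·max(a₈, a₅²)·(|x−x̄|² + |y−ȳ|²) + 0.25·a₃·|x−x̄|²·(x² + x̄²). -/
/-!
Write `P = |x| ^ (3/2)` and `Q = |x̄| ^ (3/2)`. By the mean value theorem for `p ↦ p ^ (3/2)`,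
`(P - Q)² ≤ 9/4 (|x| + |x̄|) |x - x̄|²`, and `(A + B)² ≤ 2A² + 2B²` separates the two variables.
The growing coefficient `9/2 a₄² (|x| + |x̄|)` is absorbed by evaluating the supremum defining
`a₈` at `u = (|x| + |x̄|)/4`: what is left over is a multiple of `(|x| + |x̄|)² ≤ 2 (x² + x̄²)`.
-/

lemma sq_rpow_three_halves_sub_le {p q : ℝ} (hp : 0 ≤ p) (hq : 0 ≤ q) :
    (p ^ ((3 : ℝ) / 2) - q ^ ((3 : ℝ) / 2)) ^ 2 ≤ 9 / 4 * (p + q) * (p - q) ^ 2 := by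
  obtain ⟨s, hs, rfl⟩ : ∃ s, 0 ≤ s ∧ p = s ^ 2 := ⟨√p, Real.sqrt_nonneg p, (Real.sq_sqrt hp).symm⟩
  obtain ⟨t, ht, rfl⟩ : ∃ t, 0 ≤ t ∧ q = t ^ 2 := ⟨√q, Real.sqrt_nonneg q, (Real.sq_sqrt hq).symm⟩
  have rpow_eq (r : ℝ) (hr : 0 ≤ r) : (r ^ 2) ^ ((3 : ℝ) / 2) = r ^ 3 := by
    rw [← Real.rpow_natCast, ← Real.rpow_mul hr]
    norm_num
  rw [rpow_eq s hs, rpow_eq t ht]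
  have hfactor : (s ^ 2 + s * t + t ^ 2) ^ 2 ≤ 9 / 4 * (s ^ 2 + t ^ 2) * (s + t) ^ 2 := by
    have h1 : s ^ 2 + s * t + t ^ 2 ≤ 3 / 2 * (s ^ 2 + t ^ 2) := by nlinarith [sq_nonneg (s - t)]
    have h2 : s ^ 2 + s * t + t ^ 2 ≤ (s + t) ^ 2 := by nlinarith [mul_nonneg hs ht]
    have h3 : 0 ≤ s ^ 2 + s * t + t ^ 2 := by positivity
    nlinarith [mul_le_mul h1 h2 h3 (by positivity)]
  calc (s ^ 3 - t ^ 3) ^ 2 = (s - t) ^ 2 * (s ^ 2 + s * t + t ^ 2) ^ 2 := by ring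
    _ ≤ (s - t) ^ 2 * (9 / 4 * (s ^ 2 + t ^ 2) * (s + t) ^ 2) := by gcongr
    _ = 9 / 4 * (s ^ 2 + t ^ 2) * (s ^ 2 - t ^ 2) ^ 2 := by ring

lemma sq_abs_rpow_three_halves_sub_le (x y : ℝ) :
    (|x| ^ ((3 : ℝ) / 2) - |y| ^ ((3 : ℝ) / 2)) ^ 2 ≤ 9 / 4 * (|x| + |y|) * |x - y| ^ 2 := by
  calc _ ≤ 9 / 4 * (|x| + |y|) * (|x| - |y|) ^ 2 :=
        sq_rpow_three_halves_sub_le (abs_nonneg x) (abs_nonneg y)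
    _ ≤ 9 / 4 * (|x| + |y|) * |x - y| ^ 2 := by
        rw [← sq_abs (|x| - |y|)]
        gcongr 9 / 4 * _ * ?_
        exact pow_le_pow_left₀ (abs_nonneg _) (abs_abs_sub_abs_le_abs_sub x y) 2

lemma le_sSup_quadratic {b c u : ℝ} (hc : 0 < c) (hu : 0 ≤ u) :
    b * u - c * u ^ 2 ≤ sSup {v : ℝ | ∃ u : ℝ, 0 ≤ u ∧ v = b * u - c * u ^ 2} := by
  refine le_csSup ⟨b ^ 2 / (4 * c), ?_⟩ ⟨u, hu, rfl⟩
  rintro v ⟨w, -, rfl⟩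
  rw [le_div_iff₀ (by positivity)]
  nlinarith [sq_nonneg (2 * c * w - b)]

theorem stmt_13 (a₃ a₄ a₅ a₈ : ℝ) (h₃ : 0 < a₃)
    (ha₈ : a₈ = sSup {v : ℝ | ∃ u : ℝ, 0 ≤ u ∧ v = 9 * a₄ ^ 2 * u - 0.25 * a₃ * u ^ 2}) :
    ∀ x xb y yb : ℝ,
      ((a₄ * |x| ^ ((3:ℝ)/2) + a₅ * y) - (a₄ * |xb| ^ ((3:ℝ)/2) + a₅ * yb)) ^ 2
        ≤ 2 * (max a₈ (a₅ ^ 2)) * (|x - xb| ^ 2 + |y - yb| ^ 2)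
          + 0.25 * a₃ * |x - xb| ^ 2 * (x ^ 2 + xb ^ 2) := by
  intro x xb y yb
  set M := max a₈ (a₅ ^ 2)
  set w := |x| + |xb|
  have hsup : 9 * a₄ ^ 2 * (w / 4) - 0.25 * a₃ * (w / 4) ^ 2 ≤ M :=
    (ha₈ ▸ le_sSup_quadratic (by positivity) (by positivity)).trans (le_max_left _ _)
  have hw : w ^ 2 ≤ 2 * (x ^ 2 + xb ^ 2) := by
    rw [← sq_abs x, ← sq_abs xb]
    exact add_sq_le
  have hcoef : 9 / 2 * a₄ ^ 2 * w ≤ 2 * M + 0.25 * a₃ * (x ^ 2 + xb ^ 2) := by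
    nlinarith [mul_le_mul_of_nonneg_left hw h₃.le, sq_nonneg w]
  calc _ = (a₄ * (|x| ^ ((3:ℝ)/2) - |xb| ^ ((3:ℝ)/2)) + a₅ * (y - yb)) ^ 2 := by ring
    _ ≤ 2 * (a₄ ^ 2 * (|x| ^ ((3:ℝ)/2) - |xb| ^ ((3:ℝ)/2)) ^ 2 + a₅ ^ 2 * |y - yb| ^ 2) := by
        rw [sq_abs, ← mul_pow, ← mul_pow]
        exact add_sq_le
    _ ≤ 2 * (a₄ ^ 2 * (9 / 4 * w * |x - xb| ^ 2) + M * |y - yb| ^ 2) := by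
        gcongr
        · exact sq_abs_rpow_three_halves_sub_le x xb
        · exact le_max_right _ _
    _ = 9 / 2 * a₄ ^ 2 * w * |x - xb| ^ 2 + 2 * M * |y - yb| ^ 2 := by ring
    _ ≤ (2 * M + 0.25 * a₃ * (x ^ 2 + xb ^ 2)) * |x - xb| ^ 2 + 2 * M * |y - yb| ^ 2 := by
        gcongr
    _ = _ := by ring
end

section
/- Let a₁, a₂, a₃, a₄, a₅ ∈ ℝ with a₃ > 0, f(x,y) = a₁ + a₂|y|^{4/3} − a₃x³, g(x,y) = a₄|x|^{3/2} + a₅y, a₆ = sup_{u≥0}(8u^{2/3} − 0.5a₃u²), a₈ = sup_{u≥0}(9a₄²u − 0.25a₃u²), H₂ = max(a₆, a₂²) + 2·max(a₈, a₅²), and U(x,x̄) = 0.25a₃|x−x̄|²(x² + x̄²). Then for all x, x̄, y, ȳ ∈ ℝ: (x−x̄)(f(x,y) − f(x̄,ȳ)) + (g(x,y) − g(x̄,ȳ))² ≤ H₂(|x−x̄|² + |y−ȳ|²) − U(x,x̄) + U(y,ȳ). -/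
/-!
Expand both differences and estimate term by term. The cubic drift gives
`-(x - x̄)(x³ - x̄³) ≤ -½|x - x̄|²(x² + x̄²)`. For the power terms, convexity of `t ↦ t^p`
(`p ≥ 1`) bounds `|a^p - b^p|` by `p max(a,b)^(p-1) |a - b|`; after Young's inequality this leaves
`max(|y|,|ȳ|)^{2/3}|y - ȳ|²` and `max(|x|,|x̄|)|x - x̄|²`, and the suprema `a₆`, `a₈` trade these
weights for `a₆`, `a₈` plus a multiple of `y² + ȳ²`, resp. `x² + x̄²`, which `U` absorbs.
-/

open Real

theorem rpow_sub_rpow_le_of_le {p a b : ℝ} (hp : 1 ≤ p) (hb : 0 ≤ b) (hba : b ≤ a) :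
    a ^ p - b ^ p ≤ p * a ^ (p - 1) * (a - b) := by
  rcases (hb.trans hba).eq_or_lt with rfl | ha
  · obtain rfl : b = 0 := le_antisymm hba hb
    simp
  -- Bernoulli's inequality for `b / a = 1 + (b / a - 1)`
  have hbern := one_add_mul_self_le_rpow_one_add
    (by linarith [div_nonneg hb ha.le] : -1 ≤ b / a - 1) hp
  rw [add_sub_cancel, div_rpow hb ha.le, le_div_iff₀ (rpow_pos_of_pos ha p)] at hbern
  rw [rpow_sub_one ha.ne']
  have hrhs : p * (a ^ p / a) * (a - b) = -((p * (b / a - 1)) * a ^ p) := by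
    field_simp; ring
  nlinarith

theorem sq_rpow_sub_rpow_le {p a b : ℝ} (hp : 1 ≤ p) (ha : 0 ≤ a) (hb : 0 ≤ b) :
    (a ^ p - b ^ p) ^ 2 ≤ p ^ 2 * max a b ^ (2 * (p - 1)) * (a - b) ^ 2 := by
  wlog hba : b ≤ a generalizing a b
  · have := this hb ha (le_of_not_ge hba)
    rwa [max_comm, ← neg_sub a, ← neg_sub (a ^ p), neg_sq, neg_sq] at this
  have hmono : b ^ p ≤ a ^ p := rpow_le_rpow hb hba (by linarith)
  have hsq := pow_le_pow_left₀ (sub_nonneg.2 hmono) (rpow_sub_rpow_le_of_le hp hb hba) 2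
  rw [max_eq_left hba, mul_comm 2, rpow_mul ha, rpow_two]
  linarith [show (p * a ^ (p - 1) * (a - b)) ^ 2 = p ^ 2 * (a ^ (p - 1)) ^ 2 * (a - b) ^ 2 by ring]

theorem sq_abs_rpow_sub_abs_rpow_le {p : ℝ} (hp : 1 ≤ p) (x y : ℝ) :
    (|x| ^ p - |y| ^ p) ^ 2 ≤ p ^ 2 * max |x| |y| ^ (2 * (p - 1)) * (x - y) ^ 2 := by
  refine (sq_rpow_sub_rpow_le hp (abs_nonneg x) (abs_nonneg y)).trans ?_
  exact mul_le_mul_of_nonneg_left (sq_le_sq.2 (by simpa using abs_abs_sub_abs_le_abs_sub x y))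
    (by positivity)

theorem sq_max_abs_le (x y : ℝ) : max |x| |y| ^ 2 ≤ x ^ 2 + y ^ 2 := by
  rcases max_choice |x| |y| with h | h <;> rw [h, sq_abs] <;> nlinarith [sq_nonneg x, sq_nonneg y]

theorem sub_sq_mul_add_sq_le (x y : ℝ) :
    (x - y) ^ 2 * (x ^ 2 + y ^ 2) ≤ 2 * ((x - y) * (x ^ 3 - y ^ 3)) := by
  nlinarith [mul_nonneg (sq_nonneg (x - y)) (sq_nonneg (x + y))]

theorem le_sSup_of_forall_le {f : ℝ → ℝ} {C : ℝ} (hC : ∀ u, 0 ≤ u → f u ≤ C) {u : ℝ}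
    (hu : 0 ≤ u) : f u ≤ sSup {v | ∃ u, 0 ≤ u ∧ v = f u} :=
  le_csSup ⟨C, by rintro v ⟨w, hw, rfl⟩; exact hC w hw⟩ ⟨u, hu, rfl⟩

theorem eight_mul_rpow_sub_le {a₃ u : ℝ} (h₃ : 0 < a₃) (hu : 0 ≤ u) :
    8 * u ^ ((2:ℝ)/3) - 0.5 * a₃ * u ^ 2 ≤ 8 + 32 / a₃ := by
  have h23 : u ^ ((2:ℝ)/3) ≤ 1 + u := by
    rcases le_total u 1 with h | h
    · linarith [rpow_le_one hu h (by norm_num : (0:ℝ) ≤ 2/3)]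
    · linarith [rpow_le_self_of_one_le h (by norm_num : (2:ℝ)/3 ≤ 1)]
  have hquad : 8 * u - 0.5 * a₃ * u ^ 2 ≤ 32 / a₃ := by
    rw [le_div_iff₀ h₃]; nlinarith [sq_nonneg (a₃ * u - 8)]
  linarith

theorem nine_mul_sub_le (a₄ : ℝ) {a₃ : ℝ} (h₃ : 0 < a₃) (u : ℝ) :
    9 * a₄ ^ 2 * u - 0.25 * a₃ * u ^ 2 ≤ 81 * a₄ ^ 4 / a₃ := by
  rw [le_div_iff₀ h₃]; nlinarith [sq_nonneg (a₃ * u - 18 * a₄ ^ 2)]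

theorem sub_mul_sub_rpow_four_thirds_sub_cube_le {a₂ a₃ a₆ : ℝ} (h₃ : 0 < a₃)
    (ha₆ : ∀ u, 0 ≤ u → 8 * u ^ ((2:ℝ)/3) - 0.5 * a₃ * u ^ 2 ≤ a₆) (x xb y yb : ℝ) :
    (x - xb) * (a₂ * (|y| ^ ((4:ℝ)/3) - |yb| ^ ((4:ℝ)/3)) - a₃ * (x ^ 3 - xb ^ 3))
      ≤ max a₆ (a₂ ^ 2) * ((x - xb) ^ 2 + (y - yb) ^ 2)
        - a₃ / 2 * (x - xb) ^ 2 * (x ^ 2 + xb ^ 2) + a₃ / 18 * (y - yb) ^ 2 * (y ^ 2 + yb ^ 2) := by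
  set D := |y| ^ ((4:ℝ)/3) - |yb| ^ ((4:ℝ)/3)
  set m := max |y| |yb|
  have hD : D ^ 2 ≤ 16 / 9 * m ^ ((2:ℝ)/3) * (y - yb) ^ 2 := by
    have := sq_abs_rpow_sub_abs_rpow_le (p := 4/3) (by norm_num) y yb
    rwa [show 2 * ((4:ℝ)/3 - 1) = 2/3 by norm_num, show ((4:ℝ)/3) ^ 2 = 16/9 by norm_num] at this
  have hm : 8 * m ^ ((2:ℝ)/3) ≤ a₆ + a₃ / 2 * (y ^ 2 + yb ^ 2) := by
    nlinarith [ha₆ m (le_max_of_le_left (abs_nonneg y)), sq_max_abs_le y yb]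
  have ha₆_nonneg : 0 ≤ a₆ := by simpa using ha₆ 0 le_rfl
  have hYoung : a₂ * (x - xb) * D ≤ a₂ ^ 2 / 2 * (x - xb) ^ 2 + D ^ 2 / 2 := by
    linarith [sq_nonneg (a₂ * (x - xb) - D)]
  have hmY := mul_le_mul_of_nonneg_right hm (sq_nonneg (y - yb))
  have hcubic := mul_le_mul_of_nonneg_left (sub_sq_mul_add_sq_le x xb) h₃.le
  have hA₁ : a₂ ^ 2 / 2 * (x - xb) ^ 2 ≤ max a₆ (a₂ ^ 2) * (x - xb) ^ 2 :=
    mul_le_mul_of_nonneg_right (by linarith [le_max_right a₆ (a₂ ^ 2), sq_nonneg a₂]) (sq_nonneg _)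
  have hA₂ : a₆ / 9 * (y - yb) ^ 2 ≤ max a₆ (a₂ ^ 2) * (y - yb) ^ 2 :=
    mul_le_mul_of_nonneg_right (by linarith [le_max_left a₆ (a₂ ^ 2)]) (sq_nonneg _)
  linarith

theorem sq_add_rpow_three_halves_sub_le {a₃ a₄ a₅ a₈ : ℝ} (h₃ : 0 < a₃)
    (ha₈ : ∀ u, 0 ≤ u → 9 * a₄ ^ 2 * u - 0.25 * a₃ * u ^ 2 ≤ a₈) (x xb y yb : ℝ) :
    (a₄ * (|x| ^ ((3:ℝ)/2) - |xb| ^ ((3:ℝ)/2)) + a₅ * (y - yb)) ^ 2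
      ≤ 2 * max a₈ (a₅ ^ 2) * ((x - xb) ^ 2 + (y - yb) ^ 2)
        + a₃ / 8 * (x - xb) ^ 2 * (x ^ 2 + xb ^ 2) := by
  set D := |x| ^ ((3:ℝ)/2) - |xb| ^ ((3:ℝ)/2)
  set m := max |x| |xb|
  have hD : D ^ 2 ≤ 9 / 4 * m * (x - xb) ^ 2 := by
    have := sq_abs_rpow_sub_abs_rpow_le (p := 3/2) (by norm_num) x xb
    rwa [show 2 * ((3:ℝ)/2 - 1) = 1 by norm_num, Real.rpow_one,
      show ((3:ℝ)/2) ^ 2 = 9/4 by norm_num] at this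
  have hm : 9 * a₄ ^ 2 * m ≤ a₈ + a₃ / 4 * (x ^ 2 + xb ^ 2) := by
    nlinarith [ha₈ m (le_max_of_le_left (abs_nonneg x)), sq_max_abs_le x xb]
  have ha₈_nonneg : 0 ≤ a₈ := by simpa using ha₈ 0 le_rfl
  have hsplit : (a₄ * D + a₅ * (y - yb)) ^ 2 ≤ 2 * a₄ ^ 2 * D ^ 2 + 2 * a₅ ^ 2 * (y - yb) ^ 2 := by
    linarith [sq_nonneg (a₄ * D - a₅ * (y - yb))]
  have hDa := mul_le_mul_of_nonneg_left hD (sq_nonneg a₄)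
  have hmX := mul_le_mul_of_nonneg_right hm (sq_nonneg (x - xb))
  have hB₁ : a₈ / 2 * (x - xb) ^ 2 ≤ 2 * max a₈ (a₅ ^ 2) * (x - xb) ^ 2 :=
    mul_le_mul_of_nonneg_right (by linarith [le_max_left a₈ (a₅ ^ 2)]) (sq_nonneg _)
  have hB₂ : 2 * a₅ ^ 2 * (y - yb) ^ 2 ≤ 2 * max a₈ (a₅ ^ 2) * (y - yb) ^ 2 :=
    mul_le_mul_of_nonneg_right (by linarith [le_max_right a₈ (a₅ ^ 2)]) (sq_nonneg _)
  linarith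

theorem stmt_19 (a₁ a₂ a₃ a₄ a₅ a₆ a₈ H₂ : ℝ) (h₃ : 0 < a₃)
    (ha₆ : a₆ = sSup {v : ℝ | ∃ u : ℝ, 0 ≤ u ∧ v = 8 * u ^ ((2:ℝ)/3) - 0.5 * a₃ * u ^ 2})
    (ha₈ : a₈ = sSup {v : ℝ | ∃ u : ℝ, 0 ≤ u ∧ v = 9 * a₄ ^ 2 * u - 0.25 * a₃ * u ^ 2})
    (hH₂ : H₂ = max a₆ (a₂ ^ 2) + 2 * max a₈ (a₅ ^ 2))
    (U : ℝ → ℝ → ℝ)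
    (hU : ∀ x xb : ℝ, U x xb = 0.25 * a₃ * |x - xb| ^ 2 * (x ^ 2 + xb ^ 2)) :
    ∀ x xb y yb : ℝ,
      (x - xb) * ((a₁ + a₂ * |y| ^ ((4:ℝ)/3) - a₃ * x ^ 3)
          - (a₁ + a₂ * |yb| ^ ((4:ℝ)/3) - a₃ * xb ^ 3))
        + ((a₄ * |x| ^ ((3:ℝ)/2) + a₅ * y) - (a₄ * |xb| ^ ((3:ℝ)/2) + a₅ * yb)) ^ 2
        ≤ H₂ * (|x - xb| ^ 2 + |y - yb| ^ 2) - U x xb + U y yb := by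
  intro x xb y yb
  have h₆ : ∀ u, 0 ≤ u → 8 * u ^ ((2:ℝ)/3) - 0.5 * a₃ * u ^ 2 ≤ a₆ := fun u hu => by
    rw [ha₆]; exact le_sSup_of_forall_le (fun _ => eight_mul_rpow_sub_le h₃) hu
  have h₈ : ∀ u, 0 ≤ u → 9 * a₄ ^ 2 * u - 0.25 * a₃ * u ^ 2 ≤ a₈ := fun u hu => by
    rw [ha₈]; exact le_sSup_of_forall_le (fun w _ => nine_mul_sub_le a₄ h₃ w) hu
  have hf := sub_mul_sub_rpow_four_thirds_sub_cube_le (a₂ := a₂) h₃ h₆ x xb y yb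
  have hg := sq_add_rpow_three_halves_sub_le (a₅ := a₅) h₃ h₈ x xb y yb
  have hx : 0 ≤ a₃ * (x - xb) ^ 2 * (x ^ 2 + xb ^ 2) := by positivity
  have hy : 0 ≤ a₃ * (y - yb) ^ 2 * (y ^ 2 + yb ^ 2) := by positivity
  rw [hH₂, hU, hU, sq_abs, sq_abs]
  linarith
end
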